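/- The UD-pTL map ζ preserves the phase space 𝒯 = {(J,W) ∈ ℝ^{2g+2} : Σ_{i=1}^{g+1} J_i < Σ_{i=1}^{g+1} W_i}: if Σ J_i < Σ W_i, then Σ_{i=1}^{g+1} W̄_i = Σ_{i=1}^{g+1} W_i and Σ_{i=1}^{g+1} J̄_i = Σ_{i=1}^{g+1} J_i, hence Σ J̄_i < Σ W̄_i; in particular the quantity C_{−1} := Σ_{i=1}^{g+1} (J_i + W_i) satisfies Σ_i (J̄_i + W̄_i) = Σ_i (J_i + W_i). -/

import Mathlib

open Fin.NatCast in
/-- `X_i = max_{0 ≤ k ≤ g} Σ_{l=1}^{k} (J_{i-l} - W_{i-l})`, indices cyclic mod `g+1`. -/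
noncomputable def udX (g : ℕ) (J W : Fin (g + 1) → ℝ) (i : Fin (g + 1)) : ℝ :=
  (Finset.range (g + 1)).sup' ⟨0, Finset.mem_range.mpr (Nat.succ_pos g)⟩
    (fun k => ∑ l ∈ Finset.Icc 1 k, (J (i - (l : Fin (g + 1))) - W (i - (l : Fin (g + 1)))))

/-- `J̄_i = min(W_i, X_i + J_i)`. -/
noncomputable def udJbar (g : ℕ) (J W : Fin (g + 1) → ℝ) (i : Fin (g + 1)) : ℝ :=
  min (W i) (udX g J W i + J i)

/-- `W̄_i = J_{i+1} + W_i - J̄_i`. -/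
noncomputable def udWbar (g : ℕ) (J W : Fin (g + 1) → ℝ) (i : Fin (g + 1)) : ℝ :=
  J (i + 1) + W i - udJbar g J W i


/-!
Write `a = J - W`, so that `X_i` is the largest of the partial sums `Σ_{l=1}^{k} a_{i-l}`,
`0 ≤ k ≤ g`. Passing from `i` to `i + 1` shifts these sums to `a_i + Σ_{l=1}^{k} a_{i-l}` and
adds the empty sum `0`; the one shifted sum that no longer fits, `k = g`, equals `Σ a`, so when
`Σ a < 0` it is beaten by `0`. This gives the max-plus recursion `X_{i+1} = max(0, a_i + X_i)`.
Substituting it into the definition of `J̄` yields `J̄_i = J_i + X_i - X_{i+1}`, which telescopes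
cyclically to `Σ J̄ = Σ J`; then `Σ W̄ = Σ W` because `W̄_i + J̄_i = J_{i+1} + W_i`.
-/

open Finset Fin.NatCast

theorem sum_Icc_one_eq_sum_range {M : Type*} [AddCommMonoid M] (f : ℕ → M) (k : ℕ) :
    ∑ l ∈ Icc 1 k, f l = ∑ m ∈ range k, f (m + 1) := by
  rw [range_eq_Ico, sum_Ico_add', ← Ico_add_one_right_eq_Icc, zero_add]

theorem sum_comp_add_right {A M : Type*} [AddGroup A] [Fintype A] [AddCommMonoid M]
    (f : A → M) (c : A) : ∑ x, f (x + c) = ∑ x, f x :=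
  Equiv.sum_comp (Equiv.addRight c) f

section CyclicPartialSum

variable {G : Type*} [AddCommGroup G] {n : ℕ}

def cyclicPartialSum (a : Fin (n + 1) → G) (i : Fin (n + 1)) (k : ℕ) : G :=
  ∑ l ∈ Icc 1 k, a (i - l)

variable (a : Fin (n + 1) → G) (i : Fin (n + 1))

@[simp]
theorem cyclicPartialSum_zero : cyclicPartialSum a i 0 = 0 := by
  simp [cyclicPartialSum]

theorem cyclicPartialSum_succ (k : ℕ) :
    cyclicPartialSum a (i + 1) (k + 1) = a i + cyclicPartialSum a i k := by
  simp only [cyclicPartialSum, sum_Icc_one_eq_sum_range, sum_range_succ', Nat.cast_add,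
    Nat.cast_one, Nat.cast_zero, zero_add, add_sub_cancel_right, add_comm (a i)]
  congr 1
  refine sum_congr rfl fun m _ => ?_
  congr 1
  abel

theorem add_cyclicPartialSum_self : a i + cyclicPartialSum a i n = ∑ j, a j := by
  have hsum := sum_range_succ' (fun m => a (i - (m : Fin (n + 1)))) n
  rw [← Fin.sum_univ_eq_sum_range] at hsum
  simp only [Fin.cast_val_eq_self, Nat.cast_zero, sub_zero] at hsum
  rw [cyclicPartialSum, sum_Icc_one_eq_sum_range, add_comm, ← hsum]
  exact (Equiv.subLeft i).sum_comp a

end CyclicPartialSum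

section CyclicMaxPartialSum

variable {G : Type*} [AddCommGroup G] [LinearOrder G] {n : ℕ}

def cyclicMaxPartialSum (a : Fin (n + 1) → G) (i : Fin (n + 1)) : G :=
  (range (n + 1)).sup' nonempty_range_add_one (cyclicPartialSum a i)

variable (a : Fin (n + 1) → G) (i : Fin (n + 1))

theorem cyclicPartialSum_le_cyclicMaxPartialSum {k : ℕ} (hk : k ≤ n) :
    cyclicPartialSum a i k ≤ cyclicMaxPartialSum a i :=
  le_sup' _ (mem_range_succ_iff.mpr hk)

theorem cyclicMaxPartialSum_nonneg : 0 ≤ cyclicMaxPartialSum a i := by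
  simpa using cyclicPartialSum_le_cyclicMaxPartialSum a i (Nat.zero_le n)

theorem cyclicMaxPartialSum_add_one [IsOrderedAddMonoid G] (h : ∑ j, a j < 0) :
    cyclicMaxPartialSum a (i + 1) = max 0 (a i + cyclicMaxPartialSum a i) := by
  refine le_antisymm (sup'_le _ _ fun k hk => ?_) (max_le (cyclicMaxPartialSum_nonneg a _) ?_)
  · rcases k with _ | k
    · simp
    · have hkn : k ≤ n := Nat.le_of_succ_le (mem_range_succ_iff.mp hk)
      rw [cyclicPartialSum_succ]
      exact le_max_of_le_right
        (add_le_add_right (cyclicPartialSum_le_cyclicMaxPartialSum a i hkn) _)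
  · obtain ⟨k, hk, hmax⟩ := exists_mem_eq_sup' nonempty_range_add_one (cyclicPartialSum a i)
    rw [cyclicMaxPartialSum, hmax]
    rcases (mem_range_succ_iff.mp hk).lt_or_eq with hk | rfl
    · rw [← cyclicPartialSum_succ]
      exact cyclicPartialSum_le_cyclicMaxPartialSum a _ hk
    · rw [add_cyclicPartialSum_self]
      exact h.le.trans (cyclicMaxPartialSum_nonneg a _)

end CyclicMaxPartialSum

theorem udX_eq_cyclicMaxPartialSum (g : ℕ) (J W : Fin (g + 1) → ℝ) (i : Fin (g + 1)) :
    udX g J W i = cyclicMaxPartialSum (J - W) i :=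
  rfl

theorem udJbar_eq_add_udX_sub_udX (g : ℕ) (J W : Fin (g + 1) → ℝ) (h : ∑ i, J i < ∑ i, W i)
    (i : Fin (g + 1)) : udJbar g J W i = J i + udX g J W i - udX g J W (i + 1) := by
  have hneg : ∑ j, (J - W) j < 0 := by
    simpa only [Pi.sub_apply, sum_sub_distrib, sub_neg] using h
  rw [udJbar, udX_eq_cyclicMaxPartialSum, udX_eq_cyclicMaxPartialSum,
    cyclicMaxPartialSum_add_one _ _ hneg, max_comm, Pi.sub_apply, ← min_sub_sub_left]
  congr 1 <;> abel

theorem sum_udJbar (g : ℕ) (J W : Fin (g + 1) → ℝ) (h : ∑ i, J i < ∑ i, W i) :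
    ∑ i, udJbar g J W i = ∑ i, J i := by
  simp only [udJbar_eq_add_udX_sub_udX g J W h, sum_sub_distrib, sum_add_distrib,
    sum_comp_add_right (udX g J W), add_sub_cancel_right]

theorem sum_udWbar (g : ℕ) (J W : Fin (g + 1) → ℝ) (h : ∑ i, J i < ∑ i, W i) :
    ∑ i, udWbar g J W i = ∑ i, W i := by
  simp only [udWbar, sum_sub_distrib, sum_add_distrib, sum_udJbar g J W h,
    sum_comp_add_right J, add_sub_cancel_left]

theorem udpToda_preserves_phase_space_general (g : ℕ) (J W : Fin (g + 1) → ℝ)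
    (h : ∑ i, J i < ∑ i, W i) :
    (∑ i, udWbar g J W i = ∑ i, W i) ∧
    (∑ i, udJbar g J W i = ∑ i, J i) ∧
    (∑ i, udJbar g J W i < ∑ i, udWbar g J W i) ∧
    (∑ i, (udJbar g J W i + udWbar g J W i) = ∑ i, (J i + W i)) := by
  have hW := sum_udWbar g J W h
  have hJ := sum_udJbar g J W h
  refine ⟨hW, hJ, hJ ▸ hW ▸ h, ?_⟩
  rw [sum_add_distrib, sum_add_distrib, hJ, hW]

/-- The UD-pTL map preserves the phase space `Σ J_i < Σ W_i`:
both `Σ J_i` and `Σ W_i` are conserved, hence `Σ J̄_i < Σ W̄_i`;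
in particular `C_{-1} = Σ (J_i + W_i)` is conserved. -/
theorem udpToda_preserves_phase_space (g : ℕ) (hg : 1 ≤ g) (J W : Fin (g + 1) → ℝ)
    (h : ∑ i, J i < ∑ i, W i) :
    (∑ i, udWbar g J W i = ∑ i, W i) ∧
    (∑ i, udJbar g J W i = ∑ i, J i) ∧
    (∑ i, udJbar g J W i < ∑ i, udWbar g J W i) ∧
    (∑ i, (udJbar g J W i + udWbar g J W i) = ∑ i, (J i + W i)) :=
  udpToda_preserves_phase_space_general g J W h
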